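/- Define f : ℝ → ℝ by f(y) = (π/(2 y ln 10)) · sin(π · β_{d₁d₂}(y)) for d₁ + d₂/10 ≤ y < d₁ + (d₂+1)/10 (taken over all digits d₁ ∈ {1,…,9}, d₂ ∈ {0,…,9}), and f(y) = 0 for y < 1 or y ≥ 10, where β_{d₁d₂}(y) = log₁₀(10y/(10d₁ + d₂)) / log₁₀((10d₁ + d₂ + 1)/(10d₁ + d₂)). Then a random variable Y with density f is 2-digit Benford: for all digits d₁ ∈ {1,…,9} and d₂ ∈ {0,…,9}, the integral of f over [d₁ + d₂/10, d₁ + (d₂+1)/10) equals log₁₀(1 + 1/(10d₁ + d₂)). -/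

import Mathlib

/-! On a block `[a, b)` the substitution `t = log (y / a) / log (b / a)` turns
`π / (2 y) · sin (π t) dy` into `(log (b / a) / 2) · π sin (π t) dt` on `[0, 1]`,
whose integral is `log (b / a)`. On the block of two-digit prefix `n = 10 d₁ + d₂`
we have `⌊10 y⌋ = n`, so the density is of this form with `a = n / 10`,
`b = (n + 1) / 10` and `b / a = 1 + 1 / n`. -/

open MeasureTheory Real

theorem hasDerivAt_neg_mul_cos_log_div {a L y : ℝ} (ha : a ≠ 0) (hL : L ≠ 0) (hy : y ≠ 0) :
    HasDerivAt (fun y => -(L / 2) * cos (π * (log (y / a) / L)))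
      (π / (2 * y) * sin (π * (log (y / a) / L))) y := by
  have hlog : HasDerivAt (fun y => log (y / a)) y⁻¹ y := by
    convert ((hasDerivAt_id' y).div_const a).log (div_ne_zero hy ha) using 1
    field_simp
  refine ((((hlog.div_const L).const_mul π).cos).const_mul (-(L / 2))).congr_deriv ?_
  field_simp

theorem integral_pi_div_two_mul_sin_log_div {a b : ℝ} (ha : 0 < a) (hab : a < b) :
    ∫ y in a..b, π / (2 * y) * sin (π * (log (y / a) / log (b / a))) = log (b / a) := by
  have hL : log (b / a) ≠ 0 := (log_pos ((one_lt_div ha).2 hab)).ne'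
  have hderiv : ∀ y ∈ Set.uIcc a b,
      HasDerivAt (fun y => -(log (b / a) / 2) * cos (π * (log (y / a) / log (b / a))))
        (π / (2 * y) * sin (π * (log (y / a) / log (b / a)))) y := by
    intro y hy
    rw [Set.uIcc_of_le hab.le] at hy
    exact hasDerivAt_neg_mul_cos_log_div ha.ne' hL (ha.trans_le hy.1).ne'
  have hcont : ContinuousOn (fun y => π / (2 * y) * sin (π * (log (y / a) / log (b / a))))
      (Set.uIcc a b) := by
    intro y hy
    rw [Set.uIcc_of_le hab.le] at hy
    have hy0 : y ≠ 0 := (ha.trans_le hy.1).ne'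
    have : y / a ≠ 0 := div_ne_zero hy0 ha.ne'
    have : 2 * y ≠ 0 := mul_ne_zero two_ne_zero hy0
    fun_prop (disch := assumption)
  rw [intervalIntegral.integral_eq_sub_of_hasDerivAt hderiv hcont.intervalIntegrable]
  simp only [div_self ha.ne', log_one, zero_div, mul_zero, cos_zero, div_self hL, mul_one, cos_pi]
  ring

theorem setIntegral_Ico_pi_div_mul_sin_logb_div {c a b : ℝ} (hc₀ : 0 < c) (hc₁ : c ≠ 1)
    (ha : 0 < a) (hab : a < b) :
    ∫ y in Set.Ico a b, π / (2 * y * log c) * sin (π * (logb c (y / a) / logb c (b / a)))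
      = logb c (b / a) := by
  have hc : log c ≠ 0 := log_ne_zero_of_pos_of_ne_one hc₀ hc₁
  have hintegrand : ∀ y, π / (2 * y * log c) * sin (π * (logb c (y / a) / logb c (b / a)))
      = (π / (2 * y) * sin (π * (log (y / a) / log (b / a)))) / log c := by
    intro y
    simp only [logb, div_div_div_cancel_right₀ hc]
    ring
  simp only [hintegrand]
  rw [integral_div, setIntegral_congr_set Ico_ae_eq_Ioc, ← intervalIntegral.integral_of_le hab.le,
    integral_pi_div_two_mul_sin_log_div ha hab, logb]

theorem Int.floor_mul_eq_of_mem_Ico {b y : ℝ} {n : ℤ} (hb : 0 < b)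
    (hy : y ∈ Set.Ico (n / b) ((n + 1) / b)) : ⌊b * y⌋ = n := by
  rw [Int.floor_eq_iff, mul_comm]
  exact ⟨(div_le_iff₀ hb).1 hy.1, (lt_div_iff₀ hb).1 hy.2⟩

theorem twoDigitBenford_density_digit_prob (f : ℝ → ℝ)
    (hf : ∀ y : ℝ, (1 : ℝ) ≤ y → y < 10 →
      f y = Real.pi / (2 * y * Real.log 10) *
        Real.sin (Real.pi *
          (Real.logb 10 (10 * y / (⌊10 * y⌋ : ℝ)) /
            Real.logb 10 (((⌊10 * y⌋ : ℝ) + 1) / (⌊10 * y⌋ : ℝ))))) :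
    ∀ d₁ d₂ : ℕ, 1 ≤ d₁ → d₁ ≤ 9 → d₂ ≤ 9 →
      (∫ y in Set.Ico ((d₁ : ℝ) + (d₂ : ℝ) / 10) ((d₁ : ℝ) + ((d₂ : ℝ) + 1) / 10), f y)
        = Real.logb 10 (1 + 1 / (10 * (d₁ : ℝ) + (d₂ : ℝ))) := by
  intro d₁ d₂ hd₁ hd₁' hd₂
  set n : ℤ := 10 * d₁ + d₂ with hn
  have hn_cast : (n : ℝ) = 10 * d₁ + d₂ := by push_cast [hn]; rfl
  have hn_range : (10 : ℝ) ≤ n ∧ (n : ℝ) ≤ 99 := by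
    constructor <;> exact_mod_cast (by omega)
  have hblock : Set.Ico ((d₁ : ℝ) + (d₂ : ℝ) / 10) ((d₁ : ℝ) + ((d₂ : ℝ) + 1) / 10)
      = Set.Ico ((n : ℝ) / 10) ((n + 1) / 10) := by
    rw [hn_cast]; ring_nf
  have hdensity : Set.EqOn f (fun y => π / (2 * y * log 10) *
      sin (π * (logb 10 (y / (n / 10)) / logb 10 ((n + 1) / 10 / (n / 10)))))
      (Set.Ico ((n : ℝ) / 10) ((n + 1) / 10)) := by
    intro y hy
    rw [hf y (by linarith [hy.1]) (by linarith [hy.2]),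
      Int.floor_mul_eq_of_mem_Ico (by norm_num) hy]
    field_simp
  rw [hblock, setIntegral_congr_fun measurableSet_Ico hdensity,
    setIntegral_Ico_pi_div_mul_sin_logb_div (by norm_num) (by norm_num) (by linarith)
      (by linarith), ← hn_cast, div_div_div_cancel_right₀ (by norm_num), add_div,
    div_self (by linarith)]
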